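/- Let (a_n) be a sequence of pairwise orthogonal self-adjoint elements of a C*-algebra with ‖a_n‖ → 0. Then the series ∑ a_n converges in norm and ‖∑_{n ≥ N} a_n‖ = sup_{n ≥ N} ‖a_n‖ for every N; in particular ‖∑ a_n‖ = sup_n ‖a_n‖. -/

import Mathlib

/-!
For self-adjoint `x` in a C*-ring `‖x * x‖ = ‖x‖ ^ 2`, and for a finite orthogonal family
the square of the sum is the sum of the squares. Iterating, `‖∑ aᵢ‖ ^ 2 ^ k ≤ #s * M ^ 2 ^ k`
whenever `‖aᵢ‖ ≤ M`, and letting `k → ∞` gives `‖∑ aᵢ‖ ≤ M`. This yields the Cauchy criterion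
for the series and the upper bound on the norm of its sum. The lower bound comes from
`aᵢ * ∑' j, aⱼ = aᵢ * aᵢ`, so that `‖aᵢ‖ ^ 2 ≤ ‖aᵢ‖ * ‖∑' j, aⱼ‖`.
-/

open Filter Topology Finset

theorem le_of_forall_pow_two_pow_le_mul {x M c : ℝ} (hM : 0 ≤ M)
    (h : ∀ k : ℕ, x ^ 2 ^ k ≤ c * M ^ 2 ^ k) : x ≤ M := by
  by_contra! hlt
  have hx : 0 < x := hM.trans_lt hlt
  have hlim : Tendsto (fun k : ℕ => c * (M / x) ^ 2 ^ k) atTop (𝓝 0) := by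
    simpa using ((tendsto_pow_atTop_nhds_zero_of_lt_one (by positivity)
      ((div_lt_one hx).2 hlt)).comp (tendsto_pow_atTop_atTop_of_one_lt one_lt_two)).const_mul c
  have hge : ∀ k : ℕ, 1 ≤ c * (M / x) ^ 2 ^ k := fun k => by
    rw [div_pow, mul_div_assoc', le_div_iff₀ (by positivity), one_mul]
    exact h k
  exact zero_lt_one.not_ge (ge_of_tendsto' hlim hge)

theorem sum_mul_sum_of_pairwise_mul_eq_zero {ι R : Type*} [NonUnitalNonAssocSemiring R]
    {s : Finset ι} {a : ι → R} (horth : (s : Set ι).Pairwise fun i j => a i * a j = 0) :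
    (∑ i ∈ s, a i) * ∑ i ∈ s, a i = ∑ i ∈ s, a i * a i := by
  rw [sum_mul_sum]
  refine sum_congr rfl fun i hi => sum_eq_single i (fun j hj hji => horth hi hj hji.symm) ?_
  exact fun h => absurd hi h

section CStarRing

variable {A ι : Type*} [NonUnitalNormedRing A] [StarRing A] [CStarRing A]

theorem IsSelfAdjoint.norm_le_of_mul_eq_mul_self {x y : A} (hx : IsSelfAdjoint x)
    (h : x * y = x * x) : ‖x‖ ≤ ‖y‖ := by
  rcases (norm_nonneg x).eq_or_lt with hx0 | hx0
  · exact hx0 ▸ norm_nonneg y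
  refine le_of_mul_le_mul_left ?_ hx0
  calc ‖x‖ * ‖x‖ = ‖x * y‖ := by rw [h, hx.norm_mul_self, sq]
    _ ≤ ‖x‖ * ‖y‖ := norm_mul_le x y

theorem pow_two_pow_norm_sum_le_of_pairwise_mul_eq_zero {s : Finset ι} {a : ι → A}
    (hsa : ∀ i ∈ s, IsSelfAdjoint (a i)) (horth : (s : Set ι).Pairwise fun i j => a i * a j = 0)
    {M : ℝ} (hM : ∀ i ∈ s, ‖a i‖ ≤ M) (k : ℕ) : ‖∑ i ∈ s, a i‖ ^ 2 ^ k ≤ #s * M ^ 2 ^ k := by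
  induction k generalizing a M with
  | zero => simpa using (norm_sum_le s a).trans (sum_le_card_nsmul s _ M hM)
  | succ k ih =>
    have hsq_sa : ∀ i ∈ s, IsSelfAdjoint (a i * a i) := fun i hi => by
      simpa [(hsa i hi).star_eq] using IsSelfAdjoint.star_mul_self (a i)
    have hsq_orth : (s : Set ι).Pairwise fun i j => a i * a i * (a j * a j) = 0 :=
      fun i hi j hj hij => by
        change a i * a i * (a j * a j) = 0
        rw [mul_assoc, ← mul_assoc (a i) (a j), horth hi hj hij, zero_mul, mul_zero]
    have hsq_le : ∀ i ∈ s, ‖a i * a i‖ ≤ M ^ 2 := fun i hi => by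
      rw [(hsa i hi).norm_mul_self]
      exact pow_le_pow_left₀ (norm_nonneg _) (hM i hi) 2
    have hS : IsSelfAdjoint (∑ i ∈ s, a i) := isSelfAdjoint_sum s hsa
    calc ‖∑ i ∈ s, a i‖ ^ 2 ^ (k + 1) = ‖∑ i ∈ s, a i * a i‖ ^ 2 ^ k := by
          rw [← sum_mul_sum_of_pairwise_mul_eq_zero horth, hS.norm_mul_self, pow_succ', pow_mul]
      _ ≤ #s * (M ^ 2) ^ 2 ^ k := ih hsq_sa hsq_orth hsq_le
      _ = #s * M ^ 2 ^ (k + 1) := by rw [← pow_mul, ← pow_succ']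

theorem norm_sum_le_of_pairwise_mul_eq_zero {s : Finset ι} {a : ι → A}
    (hsa : ∀ i ∈ s, IsSelfAdjoint (a i)) (horth : (s : Set ι).Pairwise fun i j => a i * a j = 0)
    {M : ℝ} (hM0 : 0 ≤ M) (hM : ∀ i ∈ s, ‖a i‖ ≤ M) : ‖∑ i ∈ s, a i‖ ≤ M :=
  le_of_forall_pow_two_pow_le_mul hM0
    (pow_two_pow_norm_sum_le_of_pairwise_mul_eq_zero hsa horth hM)

section Series

variable {a : ι → A} (hsa : ∀ i, IsSelfAdjoint (a i)) (horth : Pairwise fun i j => a i * a j = 0)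
  (hnorm : Tendsto (fun i => ‖a i‖) cofinite (𝓝 0))
include hsa horth hnorm

theorem summable_of_pairwise_mul_eq_zero [CompleteSpace A] : Summable a := by
  refine summable_iff_vanishing_norm.2 fun ε hε => ?_
  have hfin : {i | ε / 2 ≤ ‖a i‖}.Finite := by
    simpa using hnorm.eventually (gt_mem_nhds (half_pos hε))
  refine ⟨hfin.toFinset, fun t ht => ?_⟩
  have hsmall : ∀ i ∈ t, ‖a i‖ ≤ ε / 2 := fun i hi =>
    (not_le.1 (by simpa using disjoint_left.1 ht hi)).le
  calc ‖∑ i ∈ t, a i‖ ≤ ε / 2 :=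
        norm_sum_le_of_pairwise_mul_eq_zero (fun i _ => hsa i) (horth.set_pairwise _)
          (by positivity) hsmall
    _ < ε := half_lt_self hε

theorem norm_tsum_eq_iSup_norm_of_pairwise_mul_eq_zero [CompleteSpace A] :
    ‖∑' i, a i‖ = ⨆ i, ‖a i‖ := by
  have hsum := summable_of_pairwise_mul_eq_zero hsa horth hnorm
  refine le_antisymm ?_ (Real.iSup_le (fun i => ?_) (norm_nonneg _))
  · refine le_of_tendsto' hsum.hasSum.norm fun s =>
      norm_sum_le_of_pairwise_mul_eq_zero (fun i _ => hsa i) (horth.set_pairwise _)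
        (Real.iSup_nonneg fun i => norm_nonneg _) fun i _ => ?_
    exact le_ciSup hnorm.bddAbove_range_of_cofinite i
  · refine (hsa i).norm_le_of_mul_eq_mul_self ?_
    rw [← hsum.tsum_mul_left]
    exact tsum_eq_single i fun j hji => horth hji.symm

end Series

end CStarRing

theorem stmt_19 {A : Type*} [NonUnitalNormedRing A] [StarRing A] [CStarRing A]
    [CompleteSpace A] (a : ℕ → A) (hsa : ∀ n, IsSelfAdjoint (a n))
    (horth : ∀ n m, n ≠ m → a n * a m = 0)
    (hnorm : Tendsto (fun n => ‖a n‖) atTop (nhds 0)) :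
    ∃ s : ℕ → A,
      (∀ N, Tendsto (fun M => ∑ n ∈ Finset.Ico N M, a n) atTop (nhds (s N))) ∧
      (∀ N, ‖s N‖ = ⨆ n : ℕ, ‖a (N + n)‖) ∧
      ‖s 0‖ = ⨆ n : ℕ, ‖a n‖ := by
  rw [← Nat.cofinite_eq_atTop] at hnorm
  have htail_sum (N : ℕ) : Summable fun n => a (N + n) := by
    simpa only [add_comm N] using
      (summable_nat_add_iff N).2 (summable_of_pairwise_mul_eq_zero hsa horth hnorm)
  have htail_norm (N : ℕ) : ‖∑' n, a (N + n)‖ = ⨆ n, ‖a (N + n)‖ :=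
    norm_tsum_eq_iSup_norm_of_pairwise_mul_eq_zero (fun n => hsa (N + n))
      (fun n m hnm => horth _ _ (by omega)) (hnorm.comp (add_right_injective N).tendsto_cofinite)
  refine ⟨fun N => ∑' n, a (N + n), fun N => ?_, htail_norm, by simpa using htail_norm 0⟩
  simp_rw [sum_Ico_eq_sum_range]
  exact (htail_sum N).hasSum.tendsto_sum_nat.comp (tendsto_sub_atTop_nat N)
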